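/- Let k > 0, q = e^{-1/(2k²)}, and let (aₙ) be a sequence of reals with Σ|aₙ| < ∞ and (bₙ) a sequence of integers. Then for λ real with |λ| Σ|aₙ| ≤ 1, the function f(x) = (k/√π) e^{-k²(log x)²}(1 + λ Σₙ aₙ sin(2π bₙ (log x)/(log q))) is a nonnegative integrable function on (0,∞) whose moments of every nonnegative integer order equal those of the log-normal density (k/√π) e^{-k²(log x)²}. -/

import Mathlib

open Real MeasureTheory Set

lemma subst_exp (h : ℝ → ℝ) :
    ∫ x in Ioi (0:ℝ), h x = ∫ t : ℝ, Real.exp t * h (Real.exp t) := by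
  have := MeasureTheory.integral_image_eq_integral_abs_deriv_smul (s := (univ : Set ℝ))
    (f := Real.exp) (f' := Real.exp) MeasurableSet.univ
    (fun x _ => (Real.hasDerivAt_exp x).hasDerivWithinAt) (Real.exp_injective.injOn) h
  simpa [image_univ, Real.range_exp, abs_of_pos (Real.exp_pos _), smul_eq_mul] using this

lemma subst_exp_int (h : ℝ → ℝ) :
    IntegrableOn h (Ioi (0:ℝ)) ↔ Integrable fun t : ℝ => Real.exp t * h (Real.exp t) := by
  have := MeasureTheory.integrableOn_image_iff_integrableOn_abs_deriv_smul (s := (univ : Set ℝ))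
    (f := Real.exp) (f' := Real.exp) MeasurableSet.univ
    (fun x _ => (Real.hasDerivAt_exp x).hasDerivWithinAt) (Real.exp_injective.injOn) h
  simpa [image_univ, Real.range_exp, abs_of_pos (Real.exp_pos _), smul_eq_mul,
    integrableOn_univ] using this

lemma int_gauss (k c : ℝ) (hk : 0 < k) :
    Integrable fun t : ℝ => Real.exp (c * t - k ^ 2 * t ^ 2) := by
  have hk2 : 0 < k ^ 2 := by positivity
  have h : ∀ t : ℝ, c * t - k ^ 2 * t ^ 2
      = c ^ 2 / (4 * k ^ 2) + (-k ^ 2 * (t - c / (2 * k ^ 2)) ^ 2) := by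
    intro t; field_simp; ring
  simp_rw [h, Real.exp_add]
  exact ((integrable_exp_neg_mul_sq hk2).comp_sub_right (c / (2 * k ^ 2))).const_mul _

lemma odd_vanish (k C : ℝ) :
    ∫ t : ℝ, Real.exp (-k ^ 2 * t ^ 2) * Real.sin (C * t) = 0 := by
  have h := MeasureTheory.integral_neg_eq_self
    (fun t : ℝ => Real.exp (-k ^ 2 * t ^ 2) * Real.sin (C * t)) (volume : Measure ℝ)
  simp only [mul_neg, neg_sq, Real.sin_neg, mul_neg, integral_neg] at h
  linarith

lemma vanish (k : ℝ) (hk : 0 < k) (r C : ℝ) (m : ℤ)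
    (hphase : C * (r / (2 * k ^ 2)) = m * (2 * π)) :
    ∫ t : ℝ, Real.exp (r * t - k ^ 2 * t ^ 2) * Real.sin (C * t) = 0 := by
  have hk2 : (0:ℝ) < k ^ 2 := by positivity
  set μ := r / (2 * k ^ 2) with hμ
  have h2k : 2 * k ^ 2 * μ = r := by rw [hμ]; field_simp [hk2.ne']
  have h := MeasureTheory.integral_add_right_eq_self (μ := (volume : Measure ℝ))
    (fun t : ℝ => Real.exp (r * t - k ^ 2 * t ^ 2) * Real.sin (C * t)) μ
  rw [← h]
  have e : ∀ t : ℝ, Real.exp (r * (t + μ) - k ^ 2 * (t + μ) ^ 2) * Real.sin (C * (t + μ))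
      = Real.exp (r * μ - k ^ 2 * μ ^ 2) * (Real.exp (-k ^ 2 * t ^ 2) * Real.sin (C * t)) := by
    intro t
    have h1 : r * (t + μ) - k ^ 2 * (t + μ) ^ 2
        = (r * μ - k ^ 2 * μ ^ 2) + (-k ^ 2 * t ^ 2) := by
      linear_combination (-t) * h2k
    have h2 : C * (t + μ) = C * t + m * (2 * π) := by rw [mul_add, hphase]
    rw [h1, Real.exp_add, h2, Real.sin_add_int_mul_two_pi]; ring
  simp_rw [e]
  rw [integral_const_mul, odd_vanish, mul_zero]

lemma moment_term (k : ℝ) (hk : 0 < k) (q : ℝ) (hq : q = Real.exp (-1 / (2 * k ^ 2)))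
    (n : ℕ) (B : ℤ) :
    ∫ x in Ioi (0:ℝ), x ^ n * Real.exp (-k ^ 2 * Real.log x ^ 2) *
      Real.sin (2 * π * (B : ℝ) * (Real.log x / Real.log q)) = 0 := by
  have hk2 : (k:ℝ) ^ 2 ≠ 0 := by positivity
  have hlogq : Real.log q = -1 / (2 * k ^ 2) := by rw [hq, Real.log_exp]
  have hlogq0 : Real.log q ≠ 0 := by
    rw [hlogq]; intro hcon
    rw [div_eq_zero_iff] at hcon
    rcases hcon with hcon | hcon
    · norm_num at hcon
    · exact (by positivity : (0:ℝ) < 2 * k ^ 2).ne' hcon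
  rw [subst_exp]
  have e : ∀ t : ℝ, Real.exp t * (Real.exp t ^ n * Real.exp (-k ^ 2 * Real.log (Real.exp t) ^ 2) *
        Real.sin (2 * π * (B : ℝ) * (Real.log (Real.exp t) / Real.log q)))
      = Real.exp ((n + 1 : ℝ) * t - k ^ 2 * t ^ 2) *
        Real.sin ((2 * π * (B : ℝ) / Real.log q) * t) := by
    intro t
    rw [Real.log_exp, ← Real.exp_nat_mul, ← Real.exp_add, ← mul_assoc, ← Real.exp_add]
    congr 1
    · congr 1; try ring
    · congr 1; field_simp; try ring
  simp_rw [e]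
  apply vanish k hk ((n:ℝ) + 1) _ (-(B * ((n:ℕ) + 1)))
  rw [hlogq]
  push_cast
  field_simp
set_option maxHeartbeats 1000000 in
theorem stmt10 (k : ℝ) (hk : 0 < k) (q : ℝ) (hq : q = Real.exp (-1 / (2 * k ^ 2)))
    (a : ℕ → ℝ) (ha : Summable fun n => |a n|) (b : ℕ → ℤ) (lam : ℝ)
    (hlam : |lam| * (∑' n, |a n|) ≤ 1)
    (f : ℝ → ℝ)
    (hf : ∀ x : ℝ, f x = (k / Real.sqrt π) * Real.exp (-k ^ 2 * Real.log x ^ 2) *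
        (1 + lam * ∑' n, a n * Real.sin (2 * π * (b n : ℝ) * (Real.log x / Real.log q)))) :
    (∀ x ∈ Ioi (0 : ℝ), 0 ≤ f x) ∧ IntegrableOn f (Ioi 0) ∧
      ∀ n : ℕ,
        ∫ x in Ioi (0 : ℝ), x ^ n * f x
          = ∫ x in Ioi (0 : ℝ),
              x ^ n * ((k / Real.sqrt π) * Real.exp (-k ^ 2 * Real.log x ^ 2)) := by
  have hπ : 0 < Real.sqrt π := Real.sqrt_pos.mpr Real.pi_pos
  set g : ℝ → ℝ := fun x => (k / Real.sqrt π) * Real.exp (-k ^ 2 * Real.log x ^ 2) with hg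
  set S : ℝ → ℝ :=
    fun x => ∑' m, a m * Real.sin (2 * π * (b m : ℝ) * (Real.log x / Real.log q)) with hS
  set A : ℝ := ∑' m, |a m| with hA
  have hg0 : ∀ x, 0 ≤ g x := fun x => by positivity
  -- summability of the series at each point
  have hterm_bd : ∀ (x : ℝ) (m : ℕ),
      |a m * Real.sin (2 * π * (b m : ℝ) * (Real.log x / Real.log q))| ≤ |a m| := by
    intro x m
    rw [abs_mul]
    calc |a m| * |Real.sin _| ≤ |a m| * 1 :=
          mul_le_mul_of_nonneg_left (Real.abs_sin_le_one _) (abs_nonneg _)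
      _ = |a m| := mul_one _
  have hsumabs : ∀ x : ℝ, Summable fun m =>
      |a m * Real.sin (2 * π * (b m : ℝ) * (Real.log x / Real.log q))| :=
    fun x => ha.of_nonneg_of_le (fun m => abs_nonneg _) (hterm_bd x)
  have hsum : ∀ x : ℝ, Summable fun m =>
      a m * Real.sin (2 * π * (b m : ℝ) * (Real.log x / Real.log q)) :=
    fun x => (hsumabs x).of_abs
  have hSabs : ∀ x : ℝ, |S x| ≤ A := by
    intro x
    calc |S x| ≤ ∑' m, |a m * Real.sin (2 * π * (b m : ℝ) * (Real.log x / Real.log q))| := by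
          simpa [Real.norm_eq_abs, abs_mul] using norm_tsum_le_tsum_norm
            (f := fun m => a m * Real.sin (2 * π * (b m : ℝ) * (Real.log x / Real.log q)))
            (by simpa [Real.norm_eq_abs, abs_mul] using hsumabs x)
      _ ≤ A := Summable.tsum_le_tsum (hterm_bd x) (hsumabs x) ha
  have hA0 : 0 ≤ A := tsum_nonneg fun m => abs_nonneg _
  have hlS : ∀ x : ℝ, |lam * S x| ≤ 1 := by
    intro x
    rw [abs_mul]
    calc |lam| * |S x| ≤ |lam| * A := mul_le_mul_of_nonneg_left (hSabs x) (abs_nonneg _)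
      _ ≤ 1 := hlam
  have h1S : ∀ x : ℝ, 0 ≤ 1 + lam * S x ∧ 1 + lam * S x ≤ 2 := by
    intro x
    have := abs_le.mp (hlS x)
    constructor <;> linarith [this.1, this.2]
  have hfg : ∀ x : ℝ, f x = g x * (1 + lam * S x) := fun x => hf x
  -- measurability
  have hSmeas : Measurable S := by
    apply measurable_of_tendsto_metrizable
      (f := fun N x => ∑ m ∈ Finset.range N,
        a m * Real.sin (2 * π * (b m : ℝ) * (Real.log x / Real.log q)))
    · intro N
      apply Finset.measurable_sum
      intro m _
      exact (Real.continuous_sin.measurable.comp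
        ((measurable_const.mul ((Real.measurable_log.div_const _)))) ).const_mul _
    · rw [tendsto_pi_nhds]
      intro x
      exact (hsum x).hasSum.tendsto_sum_nat
  have hgmeas : Measurable g :=
    ((Real.measurable_log.pow_const 2).const_mul _).exp.const_mul _
  have hfmeas : Measurable f := by
    have : f = fun x => g x * (1 + lam * S x) := funext hfg
    rw [this]
    exact hgmeas.mul (measurable_const.add (hSmeas.const_mul _))
  -- integrability of x^n * g
  have hgn_int : ∀ n : ℕ, IntegrableOn (fun x : ℝ => x ^ n * g x) (Ioi 0) := by
    intro n
    rw [subst_exp_int]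
    have e : ∀ t : ℝ, Real.exp t * (Real.exp t ^ n * g (Real.exp t))
        = (k / Real.sqrt π) * Real.exp (((n : ℝ) + 1) * t - k ^ 2 * t ^ 2) := by
      intro t
      rw [hg]
      simp only [Real.log_exp]
      rw [← Real.exp_nat_mul]
      rw [show Real.exp t * (Real.exp ((n : ℝ) * t) * ((k / Real.sqrt π) *
          Real.exp (-k ^ 2 * t ^ 2))) = (k / Real.sqrt π) *
          (Real.exp t * Real.exp ((n : ℝ) * t) * Real.exp (-k ^ 2 * t ^ 2)) by ring,
        ← Real.exp_add, ← Real.exp_add]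
      congr 2
      ring
    simp_rw [e]
    exact (int_gauss k ((n : ℝ) + 1) hk).const_mul _
  have hg_int : IntegrableOn g (Ioi 0) := by simpa using hgn_int 0
  refine ⟨?_, ?_, ?_⟩
  · intro x _
    rw [hfg x]
    exact mul_nonneg (hg0 x) (h1S x).1
  · apply Integrable.mono' (hg_int.const_mul 2) (hfmeas.aestronglyMeasurable.restrict)
    filter_upwards with x
    rw [hfg x, Real.norm_eq_abs, abs_mul, abs_of_nonneg (hg0 x), abs_of_nonneg (h1S x).1]
    calc g x * (1 + lam * S x) ≤ g x * 2 :=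
          mul_le_mul_of_nonneg_left (h1S x).2 (hg0 x)
      _ = 2 * g x := mul_comm _ _
  · intro n
    -- term functions
    set F : ℕ → ℝ → ℝ := fun m x => (x ^ n * g x) *
      (a m * Real.sin (2 * π * (b m : ℝ) * (Real.log x / Real.log q))) with hF
    have hFmeas : ∀ m, Measurable (F m) := by
      intro m
      exact ((measurable_id'.pow_const n).mul hgmeas).mul
        (((Real.continuous_sin.measurable.comp
          (measurable_const.mul (Real.measurable_log.div_const _)))).const_mul _)
    have hFbd : ∀ m, ∀ᵐ x ∂(volume.restrict (Ioi (0:ℝ))),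
        ‖F m x‖ ≤ |a m| * (x ^ n * g x) := by
      intro m
      filter_upwards [ae_restrict_mem measurableSet_Ioi] with x hx
      have hxn : (0:ℝ) ≤ x ^ n * g x := mul_nonneg (pow_nonneg (le_of_lt hx) n) (hg0 x)
      rw [hF, Real.norm_eq_abs, abs_mul, abs_of_nonneg hxn]
      rw [mul_comm (|a m|) _]
      apply mul_le_mul_of_nonneg_left (hterm_bd x m) hxn
    have hFint : ∀ m, Integrable (F m) (volume.restrict (Ioi (0:ℝ))) := by
      intro m
      exact Integrable.mono' ((hgn_int n).const_mul (|a m|))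
        ((hFmeas m).aestronglyMeasurable.restrict) (hFbd m)
    have hFval : ∀ m, ∫ x in Ioi (0:ℝ), F m x = 0 := by
      intro m
      have : F m = fun x => (a m * (k / Real.sqrt π)) *
          (x ^ n * Real.exp (-k ^ 2 * Real.log x ^ 2) *
            Real.sin (2 * π * (b m : ℝ) * (Real.log x / Real.log q))) := by
        funext x; rw [hF, hg]; ring
      rw [this, integral_const_mul, moment_term k hk q hq n (b m), mul_zero]
    have hFnorm : Summable fun m => ∫ x in Ioi (0:ℝ), ‖F m x‖ := by
      apply Summable.of_nonneg_of_le
        (fun m => integral_nonneg fun x => norm_nonneg _)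
        (fun m => ?_) (ha.mul_right (∫ x in Ioi (0:ℝ), x ^ n * g x))
      exact integral_mono_ae (hFint m).norm ((hgn_int n).const_mul (|a m|)) (hFbd m) |>.trans
        (le_of_eq (integral_const_mul _ _))
    have hswap := MeasureTheory.integral_tsum_of_summable_integral_norm hFint hFnorm
    simp_rw [hFval, tsum_zero] at hswap
    have hStsum : ∀ x : ℝ, ∑' m, F m x = (x ^ n * g x) * S x := by
      intro x
      rw [hS]
      simp only [hF]
      rw [tsum_mul_left]
    rw [funext hStsum] at hswap
    -- decompose the moment integral
    have hprod_int : Integrable (fun x : ℝ => (x ^ n * g x) * S x)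
        (volume.restrict (Ioi (0:ℝ))) := by
      apply Integrable.mono' ((hgn_int n).const_mul A)
        (((measurable_id'.pow_const n).mul hgmeas).mul hSmeas
          |>.aestronglyMeasurable.restrict)
      filter_upwards [ae_restrict_mem measurableSet_Ioi] with x hx
      have hxn : (0:ℝ) ≤ x ^ n * g x := mul_nonneg (pow_nonneg (le_of_lt hx) n) (hg0 x)
      show ‖x ^ n * g x * S x‖ ≤ A * (x ^ n * g x)
      rw [Real.norm_eq_abs, abs_mul, abs_of_nonneg hxn, mul_comm A _]
      exact mul_le_mul_of_nonneg_left (hSabs x) hxn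
    have hdecomp : (fun x : ℝ => x ^ n * f x)
        = fun x => x ^ n * g x + lam * ((x ^ n * g x) * S x) := by
      funext x; rw [hfg x]; ring
    rw [hdecomp, integral_add (hgn_int n) (hprod_int.const_mul lam), integral_const_mul,
      ← hswap]
    simp [hg]
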